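/- Fix T > 0 and g ∈ C²([0,1]). There exists a constant C, depending only on g, β, 𝗋, 𝗉, m₋, m₊, m̄ and T, such that for every N ≥ 2, every mass configuration with m₋ ≤ m_x ≤ m₊, and every t ∈ [0,T]: | 𝒫_N(g,t) − 𝒫_N(g,0) + ∫₀ᵗ ℛ_N(g',s) ds | ≤ C/N, where 𝒫_N(g,t) = (1/N) Σ_{x=1}^N g(x/N) p̄_x(Nt) and ℛ_N(f,s) = (1/N) Σ_{x=1}^{N−1} f(x/N) r̄_x(Ns). -/

import Mathlib

/-! Energy conservation gives `∑ r̄_x(t)² ≤ 2 H(0) = O(N)`, so `∑ |r̄_x(t)| = O(N)` by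
Cauchy–Schwarz.
Summation by parts turns the time derivative of `𝒫_N(g, t)` into
`-∑ (g((x+1)/N) - g(x/N)) r̄_x(Nt)`, which cancels `ℛ_N(g', t)` up to Taylor remainders of size
`‖g''‖∞ / N²` per site. The integrand is therefore `O(1/N)` uniformly in time. -/

open Finset intervalIntegral

/-- The disordered harmonic chain dynamics on `{1,…,N}`: `r` has components `1 ≤ x ≤ N-1`
(with the convention `r_0 = r_N = 0`) and `p` has components `1 ≤ x ≤ N`. -/
def IsChainSolution (N : ℕ) (m : ℕ → ℝ) (r p : ℝ → ℕ → ℝ) : Prop :=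
  (∀ t : ℝ, r t 0 = 0) ∧ (∀ t : ℝ, r t N = 0) ∧
  (∀ (t : ℝ) (x : ℕ), 1 ≤ x → x ≤ N - 1 →
    HasDerivAt (fun s => r s x) (p t (x + 1) / m (x + 1) - p t x / m x) t) ∧
  (∀ (t : ℝ) (x : ℕ), 1 ≤ x → x ≤ N →
    HasDerivAt (fun s => p s x) (r t x - r t (x - 1)) t)

theorem sum_Icc_mul_sub_pred {R : Type*} [CommRing R] (a w : ℕ → R) (hw0 : w 0 = 0) (M : ℕ) :
    ∑ x ∈ Icc 1 (M + 1), a x * (w x - w (x - 1))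
      = a (M + 1) * w (M + 1) - ∑ x ∈ Icc 1 M, (a (x + 1) - a x) * w x := by
  induction M with
  | zero => simp [hw0]
  | succ M ih =>
    rw [sum_Icc_succ_top (by omega), ih, sum_Icc_succ_top (by omega), Nat.add_sub_cancel]
    ring

theorem sum_Icc_mul_sub_pred_eq_neg {R : Type*} [CommRing R] (a w : ℕ → R) {N : ℕ}
    (hw0 : w 0 = 0) (hwN : w N = 0) :
    ∑ x ∈ Icc 1 N, a x * (w x - w (x - 1))
      = -∑ x ∈ Icc 1 (N - 1), (a (x + 1) - a x) * w x := by
  rcases N with _ | M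
  · simp
  · rw [sum_Icc_mul_sub_pred a w hw0, hwN, Nat.add_sub_cancel, mul_zero, zero_sub]

theorem abs_sub_sub_mul_le {s : Set ℝ} (hs : Convex ℝ s) {g g' g'' : ℝ → ℝ} {M : ℝ}
    (hg' : ∀ y ∈ s, HasDerivWithinAt g (g' y) s y)
    (hg'' : ∀ y ∈ s, HasDerivWithinAt g' (g'' y) s y)
    (hM : ∀ y ∈ s, |g'' y| ≤ M) {a b : ℝ} (ha : a ∈ s) (hb : b ∈ s) (hab : a ≤ b) :
    |g b - g a - g' a * (b - a)| ≤ M * (b - a) ^ 2 := by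
  have hab_s : Set.Icc a b ⊆ s := hs.ordConnected.out ha hb
  have hderiv : ∀ y ∈ Set.Icc a b,
      HasDerivWithinAt (fun y => g y - g' a * y) (g' y - g' a) (Set.Icc a b) y := fun y hy => by
    simpa using
      ((hg' y (hab_s hy)).mono hab_s).fun_sub ((hasDerivWithinAt_id y _).const_mul (g' a))
  have hbound : ∀ y ∈ Set.Icc a b, ‖g' y - g' a‖ ≤ M * (b - a) := fun y hy =>
    calc ‖g' y - g' a‖ ≤ M * ‖y - a‖ :=
          hs.norm_image_sub_le_of_norm_hasDerivWithin_le hg'' hM ha (hab_s hy)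
      _ ≤ M * (b - a) := by
          have hM0 : 0 ≤ M := (abs_nonneg _).trans (hM a ha)
          rw [Real.norm_eq_abs, abs_of_nonneg (sub_nonneg.2 hy.1)]
          exact mul_le_mul_of_nonneg_left (by linarith [hy.2]) hM0
  have := (convex_Icc a b).norm_image_sub_le_of_norm_hasDerivWithin_le hderiv hbound
    (Set.left_mem_Icc.2 hab) (Set.right_mem_Icc.2 hab)
  rw [Real.norm_eq_abs, Real.norm_eq_abs, abs_of_nonneg (sub_nonneg.2 hab)] at this
  calc |g b - g a - g' a * (b - a)| = |g b - g' a * b - (g a - g' a * a)| := by ring_nf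
    _ ≤ M * (b - a) * (b - a) := this
    _ = M * (b - a) ^ 2 := by ring

noncomputable def chainEnergy (N : ℕ) (m : ℕ → ℝ) (r p : ℝ → ℕ → ℝ) (t : ℝ) : ℝ :=
  ∑ x ∈ Icc 1 N, p t x ^ 2 / (2 * m x) + ∑ x ∈ Icc 1 (N - 1), r t x ^ 2 / 2

section
variable {N : ℕ} {m : ℕ → ℝ} {r p : ℝ → ℕ → ℝ}

theorem sum_sq_le_two_mul_chainEnergy (hm : ∀ x, 0 ≤ m x) (t : ℝ) :
    ∑ x ∈ Icc 1 (N - 1), r t x ^ 2 ≤ 2 * chainEnergy N m r p t := by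
  have hp : 0 ≤ ∑ x ∈ Icc 1 N, p t x ^ 2 / (2 * m x) :=
    sum_nonneg fun x _ => div_nonneg (sq_nonneg _) (mul_nonneg zero_le_two (hm x))
  rw [chainEnergy, ← sum_div]
  linarith

theorem chainEnergy_le {R P mplus : ℝ} (t : ℝ) (hm : ∀ x, 0 ≤ m x ∧ m x ≤ mplus)
    (hr : ∀ x, 1 ≤ x → x ≤ N - 1 → |r t x| ≤ R)
    (hp : ∀ x, 1 ≤ x → x ≤ N → |p t x| ≤ m x * P) :
    chainEnergy N m r p t ≤ N * (mplus * P ^ 2 / 2 + R ^ 2 / 2) := by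
  have hpx : ∀ x ∈ Icc 1 N, p t x ^ 2 / (2 * m x) ≤ mplus * P ^ 2 / 2 := fun x hx => by
    obtain ⟨hx1, hxN⟩ := mem_Icc.1 hx
    calc p t x ^ 2 / (2 * m x) ≤ (m x * P) ^ 2 / (2 * m x) := by
          gcongr ?_ / _
          · exact mul_nonneg zero_le_two (hm x).1
          exact sq_le_sq' (neg_le_of_abs_le (hp x hx1 hxN)) (le_of_abs_le (hp x hx1 hxN))
      _ = m x * P ^ 2 / 2 := by
          rcases (hm x).1.eq_or_lt with h0 | hpos
          · simp [← h0]
          · field_simp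
      _ ≤ mplus * P ^ 2 / 2 := by gcongr; exact (hm x).2
  have hrx : ∀ x ∈ Icc 1 (N - 1), r t x ^ 2 / 2 ≤ R ^ 2 / 2 := fun x hx => by
    obtain ⟨hx1, hxN⟩ := mem_Icc.1 hx
    have := hr x hx1 hxN
    gcongr ?_ / _
    exact sq_le_sq' (neg_le_of_abs_le this) (le_of_abs_le this)
  calc chainEnergy N m r p t
      ≤ #(Icc 1 N) • (mplus * P ^ 2 / 2) + #(Icc 1 (N - 1)) • (R ^ 2 / 2) :=
        add_le_add (sum_le_card_nsmul _ _ _ hpx) (sum_le_card_nsmul _ _ _ hrx)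
    _ ≤ N * (mplus * P ^ 2 / 2) + N * (R ^ 2 / 2) := by
        rw [nsmul_eq_mul, nsmul_eq_mul, Nat.card_Icc, Nat.add_sub_cancel]
        gcongr
        simp
    _ = N * (mplus * P ^ 2 / 2 + R ^ 2 / 2) := by ring

namespace IsChainSolution

theorem hasDerivAt_sum_mul_momentum (hc : IsChainSolution N m r p) (a : ℕ → ℝ) (t : ℝ) :
    HasDerivAt (fun s => ∑ x ∈ Icc 1 N, a x * p s x)
      (-∑ x ∈ Icc 1 (N - 1), (a (x + 1) - a x) * r t x) t := by
  rw [← sum_Icc_mul_sub_pred_eq_neg a (r t) (hc.1 t) (hc.2.1 t)]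
  exact HasDerivAt.fun_sum fun x hx =>
    (hc.2.2.2 t x (mem_Icc.1 hx).1 (mem_Icc.1 hx).2).const_mul (a x)

theorem chainEnergy_eq (hc : IsChainSolution N m r p) (t : ℝ) :
    chainEnergy N m r p t = chainEnergy N m r p 0 := by
  have hderiv : ∀ s, HasDerivAt (chainEnergy N m r p) 0 s := by
    intro s
    have hp : HasDerivAt (fun u => ∑ x ∈ Icc 1 N, p u x ^ 2 / (2 * m x))
        (∑ x ∈ Icc 1 N, p s x / m x * (r s x - r s (x - 1))) s := by
      refine HasDerivAt.fun_sum fun x hx => ?_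
      exact (((hc.2.2.2 s x (mem_Icc.1 hx).1 (mem_Icc.1 hx).2).pow 2).div_const
        (2 * m x)).congr_deriv (by ring)
    have hr : HasDerivAt (fun u => ∑ x ∈ Icc 1 (N - 1), r u x ^ 2 / 2)
        (∑ x ∈ Icc 1 (N - 1), (p s (x + 1) / m (x + 1) - p s x / m x) * r s x) s := by
      refine HasDerivAt.fun_sum fun x hx => ?_
      exact (((hc.2.2.1 s x (mem_Icc.1 hx).1 (mem_Icc.1 hx).2).pow 2).div_const 2).congr_deriv
        (by ring)
    have h := hp.add hr
    rwa [sum_Icc_mul_sub_pred_eq_neg _ _ (hc.1 s) (hc.2.1 s), neg_add_cancel] at h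
  exact is_const_of_deriv_eq_zero (fun s => (hderiv s).differentiableAt)
    (fun s => (hderiv s).deriv) t 0

theorem sum_abs_r_le (hc : IsChainSolution N m r p) (hm : ∀ x, 0 ≤ m x) {E : ℝ}
    (hE : chainEnergy N m r p 0 ≤ N * E) (t : ℝ) :
    ∑ x ∈ Icc 1 (N - 1), |r t x| ≤ √(2 * E) * N := by
  rw [← Real.sqrt_sq (Nat.cast_nonneg N), ← Real.sqrt_mul' _ (sq_nonneg _)]
  refine Real.le_sqrt_of_sq_le ?_
  calc (∑ x ∈ Icc 1 (N - 1), |r t x|) ^ 2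
      ≤ #(Icc 1 (N - 1)) * ∑ x ∈ Icc 1 (N - 1), |r t x| ^ 2 := sq_sum_le_card_mul_sum_sq
    _ ≤ N * (2 * (N * E)) := by
        simp_rw [sq_abs]
        gcongr
        · simp
        calc _ ≤ 2 * chainEnergy N m r p t := sum_sq_le_two_mul_chainEnergy hm t
          _ ≤ 2 * (N * E) := by rw [hc.chainEnergy_eq t]; gcongr
    _ = 2 * E * N ^ 2 := by ring

theorem continuous_r_comp_mul (hc : IsChainSolution N m r p) {x : ℕ} (hx1 : 1 ≤ x)
    (hxN : x ≤ N - 1) (c : ℝ) : Continuous fun s => r (c * s) x :=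
  (continuous_iff_continuousAt.2 fun u => (hc.2.2.1 u x hx1 hxN).continuousAt).comp
    (continuous_const_mul c)

theorem abs_momentum_sub_add_integral_le (hc : IsChainSolution N m r p) (hN : 0 < N)
    {g g' g'' : ℝ → ℝ} {M A : ℝ}
    (hg' : ∀ y ∈ Set.Icc (0:ℝ) 1, HasDerivWithinAt g (g' y) (Set.Icc 0 1) y)
    (hg'' : ∀ y ∈ Set.Icc (0:ℝ) 1, HasDerivWithinAt g' (g'' y) (Set.Icc 0 1) y)
    (hM : ∀ y ∈ Set.Icc (0:ℝ) 1, |g'' y| ≤ M)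
    (hr : ∀ s, ∑ x ∈ Icc 1 (N - 1), |r s x| ≤ A * N) (t : ℝ) :
    |(1 / (N : ℝ)) * (∑ x ∈ Icc 1 N, g ((x : ℝ) / N) * p ((N : ℝ) * t) x)
      - (1 / (N : ℝ)) * (∑ x ∈ Icc 1 N, g ((x : ℝ) / N) * p 0 x)
      + ∫ s in (0:ℝ)..t, (1 / (N : ℝ)) *
          ∑ x ∈ Icc 1 (N - 1), g' ((x : ℝ) / N) * r ((N : ℝ) * s) x|
      ≤ M * A * |t| / N := by
  set n : ℝ := (N : ℝ)
  have hn : 0 < n := Nat.cast_pos.2 hN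
  set F : ℝ → ℝ := fun s => (1 / n) * ∑ x ∈ Icc 1 N, g (x / n) * p (n * s) x
  set E : ℝ → ℝ := fun s => (1 / n) * ∑ x ∈ Icc 1 (N - 1), g' (x / n) * r (n * s) x
  set c : ℕ → ℝ := fun x => g' (x / n) / n - (g ((x + 1 : ℕ) / n) - g (x / n))
  set R : ℝ → ℝ := fun s => ∑ x ∈ Icc 1 (N - 1), c x * r (n * s) x
  have hFderiv : ∀ s, HasDerivAt F (R s - E s) s := fun s => by
    refine (((hc.hasDerivAt_sum_mul_momentum (fun x => g (x / n)) (n * s)).comp s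
      ((hasDerivAt_id s).const_mul n)).const_mul (1 / n)).congr_deriv ?_
    simp only [R, E, c, mul_sum, sum_mul, ← sum_sub_distrib, ← sum_neg_distrib]
    refine sum_congr rfl fun x _ => ?_
    field_simp
    ring
  have hEc : Continuous E := continuous_const.mul <| continuous_finsetSum _ fun x hx =>
    continuous_const.mul (hc.continuous_r_comp_mul (mem_Icc.1 hx).1 (mem_Icc.1 hx).2 n)
  have hRc : Continuous R := continuous_finsetSum _ fun x hx =>
    continuous_const.mul (hc.continuous_r_comp_mul (mem_Icc.1 hx).1 (mem_Icc.1 hx).2 n)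
  have hcoef : ∀ x ∈ Icc 1 (N - 1), |c x| ≤ M / n ^ 2 := fun x hx => by
    obtain ⟨hx1, hxN⟩ := mem_Icc.1 hx
    have hmem : ∀ k : ℕ, k ≤ N → (k : ℝ) / n ∈ Set.Icc (0:ℝ) 1 := fun k hk =>
      ⟨by positivity, div_le_one_of_le₀ (Nat.cast_le.2 hk) hn.le⟩
    have hstep : ((x + 1 : ℕ) : ℝ) / n - x / n = 1 / n := by push_cast; ring
    have := abs_sub_sub_mul_le (convex_Icc 0 1) hg' hg'' hM (hmem x (by omega))
      (hmem (x + 1) (by omega)) (by rw [← sub_nonneg, hstep]; positivity)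
    rw [hstep] at this
    calc |c x| = |-(g ((x + 1 : ℕ) / n) - g (x / n) - g' (x / n) * (1 / n))| := by
          simp only [c]; ring_nf
      _ = |g ((x + 1 : ℕ) / n) - g (x / n) - g' (x / n) * (1 / n)| := abs_neg _
      _ ≤ M / n ^ 2 := by rw [div_eq_mul_inv M]; convert this using 2; ring
  have hRle : ∀ s, ‖R s‖ ≤ M * A / n := fun s =>
    calc ‖R s‖ ≤ ∑ x ∈ Icc 1 (N - 1), |c x| * |r (n * s) x| := by
          simpa only [Real.norm_eq_abs, ← abs_mul] using abs_sum_le_sum_abs _ _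
      _ ≤ ∑ x ∈ Icc 1 (N - 1), M / n ^ 2 * |r (n * s) x| :=
          sum_le_sum fun x hx => mul_le_mul_of_nonneg_right (hcoef x hx) (abs_nonneg _)
      _ ≤ M / n ^ 2 * (A * n) := by
          rw [← mul_sum]
          exact mul_le_mul_of_nonneg_left (hr _)
            (div_nonneg ((abs_nonneg _).trans (hM 0 (by simp))) (sq_nonneg n))
      _ = M * A / n := by field_simp
  have hF0 : F 0 = (1 / n) * ∑ x ∈ Icc 1 N, g (x / n) * p 0 x := by simp only [F, mul_zero]
  have hFTC := integral_eq_sub_of_hasDerivAt (fun s _ => hFderiv s)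
    ((hRc.sub hEc).intervalIntegrable 0 t)
  rw [integral_sub (hRc.intervalIntegrable 0 t) (hEc.intervalIntegrable 0 t), hF0] at hFTC
  calc _ = |∫ s in (0:ℝ)..t, R s| := by congr 1; linarith
    _ ≤ M * A / n * |t - 0| := norm_integral_le_of_norm_le_const fun s _ => hRle s
    _ = M * A * |t| / n := by rw [sub_zero]; ring

end IsChainSolution
end

theorem stmt19_general (rr pp : ℝ → ℝ)
    (hrrc : ContDiffOn ℝ 1 rr (Set.Icc 0 1))
    (hppc : ContDiffOn ℝ 1 pp (Set.Icc 0 1))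
    (mminus mplus mbar : ℝ) (hm0 : 0 < mminus)
    (T : ℝ)
    (g g' g'' : ℝ → ℝ)
    (hg' : ∀ y ∈ Set.Icc (0:ℝ) 1, HasDerivWithinAt g (g' y) (Set.Icc 0 1) y)
    (hg'' : ∀ y ∈ Set.Icc (0:ℝ) 1, HasDerivWithinAt g' (g'' y) (Set.Icc 0 1) y)
    (hg''c : ContinuousOn g'' (Set.Icc 0 1)) :
    ∃ C : ℝ, ∀ N : ℕ, 2 ≤ N → ∀ m : ℕ → ℝ,
      (∀ x : ℕ, m x ∈ Set.Icc mminus mplus) →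
      ∀ r p : ℝ → ℕ → ℝ, IsChainSolution N m r p →
      (∀ x : ℕ, 1 ≤ x → x ≤ N - 1 → r 0 x = rr ((x : ℝ) / N)) →
      (∀ x : ℕ, 1 ≤ x → x ≤ N → p 0 x = m x * pp ((x : ℝ) / N) / mbar) →
      ∀ t ∈ Set.Icc (0:ℝ) T,
        |(1 / (N : ℝ)) * (∑ x ∈ Finset.Icc 1 N, g ((x : ℝ) / N) * p ((N : ℝ) * t) x)
          - (1 / (N : ℝ)) * (∑ x ∈ Finset.Icc 1 N, g ((x : ℝ) / N) * p 0 x)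
          + ∫ s in (0:ℝ)..t, (1 / (N : ℝ)) *
              ∑ x ∈ Finset.Icc 1 (N - 1), g' ((x : ℝ) / N) * r ((N : ℝ) * s) x|
          ≤ C / N := by
  obtain ⟨Mr, hMr⟩ := isCompact_Icc.exists_bound_of_continuousOn hrrc.continuousOn
  obtain ⟨Mp, hMp⟩ := isCompact_Icc.exists_bound_of_continuousOn hppc.continuousOn
  obtain ⟨M2, hM2⟩ := isCompact_Icc.exists_bound_of_continuousOn hg''c
  have hM2_nonneg : 0 ≤ M2 := (norm_nonneg _).trans (hM2 0 (by simp))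
  set E := mplus * (Mp / |mbar|) ^ 2 / 2 + Mr ^ 2 / 2
  refine ⟨M2 * √(2 * E) * T, fun N hN m hm r p hc hr0 hp0 t ht => ?_⟩
  have hmass : ∀ x, 0 ≤ m x ∧ m x ≤ mplus := fun x => ⟨hm0.le.trans (hm x).1, (hm x).2⟩
  have hgrid : ∀ x : ℕ, x ≤ N → (x : ℝ) / N ∈ Set.Icc (0:ℝ) 1 := fun x hx =>
    ⟨by positivity, div_le_one_of_le₀ (Nat.cast_le.2 hx) (Nat.cast_nonneg N)⟩
  have hE0 : chainEnergy N m r p 0 ≤ N * E := chainEnergy_le 0 hmass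
    (fun x hx1 hxN => by rw [hr0 x hx1 hxN]; exact hMr _ (hgrid x (by omega)))
    (fun x hx1 hxN => by
      rw [hp0 x hx1 hxN, abs_div, abs_mul, abs_of_nonneg (hmass x).1, mul_div_assoc]
      gcongr
      · exact (hmass x).1
      · exact hMp _ (hgrid x hxN))
  calc _ ≤ M2 * √(2 * E) * |t| / N :=
        hc.abs_momentum_sub_add_integral_le (by omega) hg' hg'' (fun y hy => hM2 y hy)
          (hc.sum_abs_r_le (fun x => (hmass x).1) hE0) t
    _ ≤ M2 * √(2 * E) * T / N := by rw [abs_of_nonneg ht.1]; gcongr; exact ht.2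

/-- quantitative closure of the momentum equation.  For `g` of class `C²` on
`[0,1]` (with first and second derivatives `g'`, `g''`), uniformly for `t ∈ [0,T]`:
`| 𝒫_N(g,t) − 𝒫_N(g,0) + ∫₀ᵗ ℛ_N(g',s) ds | ≤ C/N`. -/
theorem stmt19 (β rr pp : ℝ → ℝ)
    (hβc : ContinuousOn β (Set.Icc 0 1)) (hβpos : ∀ y ∈ Set.Icc (0:ℝ) 1, 0 < β y)
    (hrrc : ContDiffOn ℝ 1 rr (Set.Icc 0 1)) (hrr0 : rr 0 = 0) (hrr1 : rr 1 = 0)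
    (hppc : ContDiffOn ℝ 1 pp (Set.Icc 0 1))
    (mminus mplus mbar : ℝ) (hm0 : 0 < mminus) (hmm : mminus ≤ mplus) (hmb : 0 < mbar)
    (T : ℝ) (hT : 0 < T)
    (g g' g'' : ℝ → ℝ)
    (hg' : ∀ y ∈ Set.Icc (0:ℝ) 1, HasDerivWithinAt g (g' y) (Set.Icc 0 1) y)
    (hg'' : ∀ y ∈ Set.Icc (0:ℝ) 1, HasDerivWithinAt g' (g'' y) (Set.Icc 0 1) y)
    (hg''c : ContinuousOn g'' (Set.Icc 0 1)) :
    ∃ C : ℝ, ∀ N : ℕ, 2 ≤ N → ∀ m : ℕ → ℝ,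
      (∀ x : ℕ, m x ∈ Set.Icc mminus mplus) →
      ∀ r p : ℝ → ℕ → ℝ, IsChainSolution N m r p →
      (∀ x : ℕ, 1 ≤ x → x ≤ N - 1 → r 0 x = rr ((x : ℝ) / N)) →
      (∀ x : ℕ, 1 ≤ x → x ≤ N → p 0 x = m x * pp ((x : ℝ) / N) / mbar) →
      ∀ t ∈ Set.Icc (0:ℝ) T,
        |(1 / (N : ℝ)) * (∑ x ∈ Finset.Icc 1 N, g ((x : ℝ) / N) * p ((N : ℝ) * t) x)
          - (1 / (N : ℝ)) * (∑ x ∈ Finset.Icc 1 N, g ((x : ℝ) / N) * p 0 x)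
          + ∫ s in (0:ℝ)..t, (1 / (N : ℝ)) *
              ∑ x ∈ Finset.Icc 1 (N - 1), g' ((x : ℝ) / N) * r ((N : ℝ) * s) x|
          ≤ C / N :=
  stmt19_general rr pp hrrc hppc mminus mplus mbar hm0 T g g' g'' hg' hg'' hg''c
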